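/- The function f : ℤ_2 → ℤ_2 defined by the (uniformly convergent) series f(x) = 1 + δ_0(x) + 6·δ_1(x) + Σ_{k=2}^∞ (1 + 2·(x mod 2^k))·2^k·δ_k(x) is a 1-Lipschitz function that is transitive modulo 2^k for every k ≥ 1 (i.e., an ergodic T-function). -/

import Mathlib

/-- The map induced by `f : ℤ_[2] → ℤ_[2]` on `ℤ/2^kℤ` (for 1-Lipschitz `f` this is the
well-defined reduction of `f` modulo `2^k`). -/
noncomputable def inducedMod (f : ℤ_[2] → ℤ_[2]) (k : ℕ) : ZMod (2 ^ k) → ZMod (2 ^ k) :=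
  fun z => PadicInt.toZModPow k (f ((z.val : ℤ_[2])))

/-- `f` is transitive modulo `2^k`: the orbit of `0` under the induced map on `ℤ/2^kℤ` is
all of `ℤ/2^kℤ`. -/
def TransitiveMod (f : ℤ_[2] → ℤ_[2]) (k : ℕ) : Prop :=
  ∀ z : ZMod (2 ^ k), ∃ n : ℕ, (inducedMod f k)^[n] 0 = z

/-- The `i`-th digit `δ_i(x) ∈ {0,1} ⊆ ℤ_2` of the 2-adic expansion of `x ∈ ℤ_2`. -/
noncomputable def dig (i : ℕ) (x : ℤ_[2]) : ℤ_[2] :=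
  ((x.appr (i + 1) / 2 ^ i % 2 : ℕ) : ℤ_[2])

/-- `x mod 2^k`: the least nonnegative residue of `x ∈ ℤ_2` modulo `2^k`, regarded as an
element of `ℤ_2`. -/
noncomputable def modPow2 (k : ℕ) (x : ℤ_[2]) : ℤ_[2] :=
  ((x.appr k : ℕ) : ℤ_[2])


/-!
A map `f : ℤ_2 → ℤ_2` that respects congruences induces maps `f_k` on `ℤ/2^kℤ`. If `f_k` is a
single cycle, `f (x + 2^k) ≡ f x + 2^k` and `∑_{m < 2^k} (f m - m) ≡ 2^k` modulo `2^(k+1)`, then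
`f_(k+1)` is a single cycle: by the first congruence `f x - x mod 2^(k+1)` only depends on
`x mod 2^k`, so telescoping along the cycle of `f_k` shows that the `2^k`-th iterate of `0` is
the sum, i.e. `2^k`, and the orbit of `0` passes through both lifts of every residue.

For the series `f`, `2^i δ_i(x) = (x mod 2^(i+1)) - (x mod 2^i)`, so `f` is obtained from the
maps `x ↦ x mod 2^i` by ring operations and a convergent sum, which preserve compatibility with
congruences. On naturals `m < 2^k` with `k ≥ 2`, `f (m + 2^k) = f m + (1 + 2m) 2^k`; this gives the
first congruence, and the second by induction on `k`, since `∑_{m < 2^k} m` is even.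
-/

open Finset

namespace PadicInt

variable {p : ℕ} [Fact p.Prime]

def tFunctions (p : ℕ) [Fact p.Prime] : Subring (ℤ_[p] → ℤ_[p]) where
  carrier := {g | ∀ n a b, toZModPow n a = toZModPow n b → toZModPow n (g a) = toZModPow n (g b)}
  mul_mem' hg hh n a b hab := by simp only [Pi.mul_apply, map_mul, hg n a b hab, hh n a b hab]
  one_mem' _ _ _ _ := rfl
  add_mem' hg hh n a b hab := by simp only [Pi.add_apply, map_add, hg n a b hab, hh n a b hab]
  zero_mem' _ _ _ _ := rfl
  neg_mem' hg n a b hab := by simp only [Pi.neg_apply, map_neg, hg n a b hab]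

theorem toZModPow_eq_iff_norm_le {a b : ℤ_[p]} {n : ℕ} :
    toZModPow n a = toZModPow n b ↔ ‖a - b‖ ≤ (p : ℝ) ^ (-n : ℤ) := by
  rw [← sub_eq_zero, ← map_sub, ← RingHom.mem_ker, ker_toZModPow, norm_le_pow_iff_mem_span_pow]

theorem mem_tFunctions_iff {g : ℤ_[p] → ℤ_[p]} :
    g ∈ tFunctions p ↔ ∀ a b, ‖g a - g b‖ ≤ ‖a - b‖ := by
  refine ⟨fun hg a b => ?_, fun hg n a b hab => ?_⟩
  · obtain rfl | hab := eq_or_ne a b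
    · simp
    have hnorm := norm_eq_zpow_neg_valuation (sub_ne_zero.2 hab)
    rw [hnorm, ← toZModPow_eq_iff_norm_le]
    exact hg _ a b (toZModPow_eq_iff_norm_le.2 hnorm.le)
  · exact toZModPow_eq_iff_norm_le.2 ((hg a b).trans (toZModPow_eq_iff_norm_le.1 hab))

theorem const_mem_tFunctions (c : ℤ_[p]) : (fun _ => c) ∈ tFunctions p :=
  fun _ _ _ _ => rfl

theorem tsum_mem_tFunctions {g : ℕ → ℤ_[p] → ℤ_[p]} (hg : ∀ k, g k ∈ tFunctions p)
    (hs : ∀ x, Summable fun k => g k x) : (fun x => ∑' k, g k x) ∈ tFunctions p := by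
  rw [mem_tFunctions_iff]
  intro a b
  rw [← (hs a).tsum_sub (hs b)]
  exact IsUltrametricDist.norm_tsum_le_of_forall_le_of_nonneg (norm_nonneg _)
    fun k => mem_tFunctions_iff.1 (hg k) a b

theorem summable_pow_mul (c : ℕ → ℤ_[p]) : Summable fun k => (p : ℤ_[p]) ^ k * c k := by
  refine Summable.of_norm_bounded (g := fun k => ((p : ℝ)⁻¹) ^ k)
    (summable_geometric_of_lt_one (by positivity) (inv_lt_one_of_one_lt₀ ?_)) fun k => ?_
  · exact_mod_cast (Fact.out : p.Prime).one_lt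
  · rw [norm_mul, norm_p_pow, zpow_neg, zpow_natCast, inv_pow]
    exact mul_le_of_le_one_right (by positivity) (norm_le_one _)

theorem toZModPow_apply (n : ℕ) (x : ℤ_[p]) : toZModPow n x = x.appr n := rfl

theorem appr_eq_val_toZModPow (n : ℕ) (x : ℤ_[p]) : x.appr n = (toZModPow n x).val := by
  rw [toZModPow_apply, ZMod.val_natCast_of_lt (appr_lt x n)]

theorem appr_natCast (n m : ℕ) : (m : ℤ_[p]).appr n = m % p ^ n := by
  rw [appr_eq_val_toZModPow, map_natCast, ZMod.val_natCast]

theorem appr_eq_appr_mod {m n : ℕ} (h : m ≤ n) (x : ℤ_[p]) : x.appr m = x.appr n % p ^ m := by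
  rw [appr_eq_val_toZModPow, ← cast_toZModPow m n h, toZModPow_apply n,
    ZMod.cast_natCast (pow_dvd_pow p h), ZMod.val_natCast]

theorem natCast_appr_mem_tFunctions (k : ℕ) :
    (fun x : ℤ_[p] => (x.appr k : ℤ_[p])) ∈ tFunctions p := by
  intro n a b hab
  simp only [map_natCast, appr_eq_val_toZModPow]
  rcases le_total n k with h | h
  · rw [← ZMod.cast_eq_val, ← ZMod.cast_eq_val, cast_toZModPow n k h, cast_toZModPow n k h, hab]
  · rw [← cast_toZModPow k n h a, ← cast_toZModPow k n h b, hab]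

end PadicInt

namespace ZMod

variable {k : ℕ}

theorem two_pow_add_two_pow : (2 : ZMod (2 ^ (k + 1))) ^ k + 2 ^ k = 0 := by
  rw [← two_mul, ← pow_succ']
  exact_mod_cast natCast_self (2 ^ (k + 1))

theorem eq_or_eq_add_two_pow_of_cast_eq {x y : ZMod (2 ^ (k + 1))}
    (h : (cast x : ZMod (2 ^ k)) = cast y) : y = x ∨ y = x + 2 ^ k := by
  have hd : (cast (y - x) : ZMod (2 ^ k)) = 0 := by
    rw [cast_sub (pow_dvd_pow 2 k.le_succ), h, sub_self]
  rw [cast_eq_val, natCast_eq_zero_iff] at hd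
  obtain ⟨c, hc⟩ := hd
  have hc2 : c < 2 := by
    have := (y - x).val_lt
    rw [hc, pow_succ] at this
    exact Nat.lt_of_mul_lt_mul_left this
  have hyx : y - x = ((2 ^ k * c : ℕ) : ZMod (2 ^ (k + 1))) := by rw [← hc, natCast_zmod_val]
  interval_cases c
  · left; simpa [sub_eq_zero] using hyx
  · right; simpa [sub_eq_iff_eq_add'] using hyx

variable {T : ZMod (2 ^ (k + 1)) → ZMod (2 ^ (k + 1))} {S : ZMod (2 ^ k) → ZMod (2 ^ k)}

theorem apply_add_two_pow_of_forall_lt (h : ∀ m : ℕ, m < 2 ^ k → T (m + 2 ^ k) = T m + 2 ^ k)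
    (x : ZMod (2 ^ (k + 1))) : T (x + 2 ^ k) = T x + 2 ^ k := by
  have hm : (cast ((cast x : ZMod (2 ^ k)).val : ZMod (2 ^ (k + 1))) : ZMod (2 ^ k)) = cast x := by
    rw [cast_natCast (pow_dvd_pow 2 k.le_succ), natCast_zmod_val]
  rcases eq_or_eq_add_two_pow_of_cast_eq hm with hx | hx <;> rw [hx]
  · exact h _ (val_lt _)
  · rw [h _ (val_lt _), add_assoc, two_pow_add_two_pow, add_zero, add_assoc, two_pow_add_two_pow,
      add_zero]

theorem cast_iterate_zero (hTS : ∀ x, (cast (T x) : ZMod (2 ^ k)) = S (cast x)) (j : ℕ) :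
    (cast (T^[j] 0) : ZMod (2 ^ k)) = S^[j] 0 := by
  rw [(Function.Semiconj.iterate_right hTS j).eq, cast_zero]

theorem iterate_two_pow_zero_eq_sum (hTS : ∀ x, (cast (T x) : ZMod (2 ^ k)) = S (cast x))
    (hT : ∀ x, T (x + 2 ^ k) = T x + 2 ^ k) (hS : ∀ y, ∃ j < 2 ^ k, S^[j] 0 = y) :
    T^[2 ^ k] 0 = ∑ m ∈ range (2 ^ k), (T m - m) := by
  have hdiff : ∀ x y, (cast x : ZMod (2 ^ k)) = cast y → T y - y = T x - x := by
    intro x y h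
    rcases eq_or_eq_add_two_pow_of_cast_eq h with rfl | rfl
    · rfl
    · rw [hT]; ring
  have hmaps : ∀ j ∈ range (2 ^ k), (S^[j] 0).val ∈ range (2 ^ k) :=
    fun j _ => mem_range.2 (val_lt _)
  have hsurj : Set.SurjOn (fun j => (S^[j] 0).val) (range (2 ^ k)) (range (2 ^ k)) := by
    intro m hm
    obtain ⟨j, hj, hjm⟩ := hS m
    exact ⟨j, mem_range.2 hj, by simp only [hjm, val_natCast_of_lt (mem_range.1 hm)]⟩
  calc T^[2 ^ k] 0 = ∑ j ∈ range (2 ^ k), (T^[j + 1] 0 - T^[j] 0) := by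
        rw [sum_range_sub (fun j => T^[j] 0)]; simp
    _ = ∑ j ∈ range (2 ^ k), (T ((S^[j] 0).val) - (S^[j] 0).val) := by
        refine sum_congr rfl fun j _ => ?_
        rw [Function.iterate_succ_apply']
        refine hdiff _ _ ?_
        rw [cast_iterate_zero hTS, cast_natCast (pow_dvd_pow 2 k.le_succ), natCast_zmod_val]
    _ = ∑ m ∈ range (2 ^ k), (T m - m) :=
        sum_nbij _ hmaps (injOn_of_surjOn_of_card_le _ hmaps hsurj le_rfl) hsurj fun _ _ => rfl

theorem exists_iterate_zero_eq_of_iterate_two_pow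
    (hTS : ∀ x, (cast (T x) : ZMod (2 ^ k)) = S (cast x))
    (hT : ∀ x, T (x + 2 ^ k) = T x + 2 ^ k) (hS : ∀ y, ∃ j < 2 ^ k, S^[j] 0 = y)
    (h2k : T^[2 ^ k] 0 = 2 ^ k) (z : ZMod (2 ^ (k + 1))) : ∃ j < 2 ^ (k + 1), T^[j] 0 = z := by
  obtain ⟨j, hj, hjz⟩ := hS (cast z)
  have hk : 2 ^ (k + 1) = 2 ^ k + 2 ^ k := by rw [pow_succ, mul_two]
  rcases eq_or_eq_add_two_pow_of_cast_eq (x := T^[j] 0) (y := z)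
    (by rw [cast_iterate_zero hTS, hjz]) with h | h
  · exact ⟨j, by omega, h.symm⟩
  · refine ⟨j + 2 ^ k, by omega, ?_⟩
    have hshift := (Function.Semiconj.iterate_right (f := (· + 2 ^ k)) (fun x => (hT x).symm) j).eq 0
    rw [Function.iterate_add_apply, h2k, h, hshift, zero_add]

theorem exists_iterate_zero_eq_succ (hTS : ∀ x, (cast (T x) : ZMod (2 ^ k)) = S (cast x))
    (hT : ∀ m : ℕ, m < 2 ^ k → T (m + 2 ^ k) = T m + 2 ^ k)
    (hsum : ∑ m ∈ range (2 ^ k), (T m - m) = 2 ^ k) (hS : ∀ y, ∃ j < 2 ^ k, S^[j] 0 = y)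
    (z : ZMod (2 ^ (k + 1))) : ∃ j < 2 ^ (k + 1), T^[j] 0 = z :=
  have hT' := apply_add_two_pow_of_forall_lt hT
  exists_iterate_zero_eq_of_iterate_two_pow hTS hT' hS
    ((iterate_two_pow_zero_eq_sum hTS hT' hS).trans hsum) z

end ZMod

namespace DeltaSeries

def digit (i n : ℕ) : ℕ := n / 2 ^ i % 2

def term (k n : ℕ) : ℕ := (1 + 2 * (n % 2 ^ (k + 2))) * 2 ^ (k + 2) * digit (k + 2) n

def onNat (n : ℕ) : ℕ := 1 + digit 0 n + 6 * digit 1 n + ∑ k ∈ range n, term k n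

theorem digit_eq_zero {i n : ℕ} (h : n < 2 ^ i) : digit i n = 0 := by
  simp [digit, Nat.div_eq_of_lt h]

theorem digit_add_two_pow {i k : ℕ} (m : ℕ) (h : i < k) : digit i (m + 2 ^ k) = digit i m := by
  obtain ⟨d, rfl⟩ := Nat.exists_eq_add_of_lt h
  rw [digit, digit, show 2 ^ (i + d + 1) = 2 ^ i * (2 * 2 ^ d) by ring,
    Nat.add_mul_div_left _ _ (by positivity), Nat.add_mul_mod_self_left]

theorem digit_add_two_pow_self {k m : ℕ} (h : m < 2 ^ k) : digit k (m + 2 ^ k) = 1 := by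
  rw [digit, Nat.add_div_right _ (by positivity), Nat.div_eq_of_lt h]

theorem add_two_pow_mod {j k : ℕ} (m : ℕ) (h : j ≤ k) : (m + 2 ^ k) % 2 ^ j = m % 2 ^ j := by
  obtain ⟨d, rfl⟩ := Nat.exists_eq_add_of_le h
  rw [pow_add, Nat.add_mul_mod_self_left]

theorem term_eq_zero {k n : ℕ} (h : n < 2 ^ (k + 2)) : term k n = 0 := by
  rw [term, digit_eq_zero h, mul_zero]

theorem term_eq_zero_of_le {k n : ℕ} (h : n ≤ k) : term k n = 0 :=
  term_eq_zero ((h.trans_lt k.lt_two_pow_self).trans (Nat.pow_lt_pow_right one_lt_two (by omega)))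

theorem onNat_eq_sum {n M : ℕ} (h : n < 2 ^ (M + 2)) :
    onNat n = 1 + digit 0 n + 6 * digit 1 n + ∑ k ∈ range M, term k n := by
  rw [onNat, sum_subset (range_mono (n.le_add_right M)) fun k _ hk =>
      term_eq_zero_of_le (by simpa using hk),
    ← sum_subset (range_mono (M.le_add_left n)) fun k _ hk =>
      term_eq_zero (h.trans_le (Nat.pow_le_pow_right two_pos (by simpa using hk)))]

theorem onNat_add_two_pow {K m : ℕ} (hm : m < 2 ^ (K + 2)) :
    onNat (m + 2 ^ (K + 2)) = onNat m + (1 + 2 * m) * 2 ^ (K + 2) := by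
  have hlt : m + 2 ^ (K + 2) < 2 ^ (K + 1 + 2) := by rw [pow_succ 2 (K + 2)]; omega
  rw [onNat_eq_sum hlt, onNat_eq_sum hm, sum_range_succ, term, add_two_pow_mod m le_rfl,
    Nat.mod_eq_of_lt hm, digit_add_two_pow_self hm, digit_add_two_pow m (by omega : 0 < K + 2),
    digit_add_two_pow m (by omega : 1 < K + 2)]
  rw [sum_congr rfl fun k hk => by
    rw [term, digit_add_two_pow m (by simp at hk; omega : k + 2 < K + 2),
      add_two_pow_mod m (by simp at hk; omega : k + 2 ≤ K + 2), ← term]]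
  ring

theorem onNat_add_two_pow_modEq {k m : ℕ} (hm : m < 2 ^ k) :
    onNat (m + 2 ^ k) ≡ onNat m + 2 ^ k [MOD 2 ^ (k + 1)] := by
  match k, hm with
  | 0, hm => interval_cases m; decide
  | 1, hm => interval_cases m <;> decide
  | K + 2, hm =>
    rw [onNat_add_two_pow hm, show (1 + 2 * m) * 2 ^ (K + 2) = 2 ^ (K + 2) + m * 2 ^ (K + 2 + 1)
      by ring, ← add_assoc]
    exact Nat.add_mul_mod_self_right _ _ _

theorem sum_onNat_sub_two_pow_succ (K : ℕ) :
    ∑ n ∈ range (2 ^ (K + 3)), ((onNat n : ℤ) - n) =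
      2 * ∑ m ∈ range (2 ^ (K + 2)), ((onNat m : ℤ) - m) +
        2 ^ (K + 3) * ∑ m ∈ range (2 ^ (K + 2)), (m : ℤ) := by
  have hshift : ∀ m ∈ range (2 ^ (K + 2)), ((onNat (2 ^ (K + 2) + m) : ℤ) - ↑(2 ^ (K + 2) + m)) =
      ((onNat m : ℤ) - m) + 2 ^ (K + 3) * m := fun m hm => by
    rw [add_comm (2 ^ (K + 2)) m, onNat_add_two_pow (mem_range.1 hm)]
    push_cast
    ring
  rw [pow_succ 2 (K + 2), mul_two, sum_range_add, sum_congr rfl hshift, sum_add_distrib, ← mul_sum]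
  ring

theorem two_dvd_sum_range_two_pow (K : ℕ) : 2 ∣ ∑ m ∈ range (2 ^ (K + 2)), (m : ℕ) :=
  ⟨2 ^ K * (2 ^ (K + 2) - 1),
    Nat.eq_of_mul_eq_mul_right two_pos ((sum_range_id_mul_two (2 ^ (K + 2))).trans (by ring))⟩

theorem sum_onNat_sub_modEq : ∀ k : ℕ,
    ∑ m ∈ range (2 ^ k), ((onNat m : ℤ) - m) ≡ 2 ^ k [ZMOD 2 ^ (k + 1)]
  | 0 => by decide
  | 1 => by decide
  | 2 => by decide
  | K + 3 => by
    have hdvd : (2 : ℤ) ^ (K + 4) ∣ 2 ^ (K + 3) * ∑ m ∈ range (2 ^ (K + 2)), (m : ℤ) := by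
      rw [pow_succ 2 (K + 3), ← Nat.cast_sum]
      exact mul_dvd_mul_left _ (by exact_mod_cast two_dvd_sum_range_two_pow K)
    have ih := (sum_onNat_sub_modEq (K + 2)).mul_left' (c := 2)
    rw [← pow_succ', ← pow_succ'] at ih
    rw [sum_onNat_sub_two_pow_succ]
    simpa only [add_zero] using ih.add (Int.modEq_zero_iff_dvd.2 hdvd)

end DeltaSeries

open PadicInt DeltaSeries

noncomputable def deltaSeries (x : ℤ_[2]) : ℤ_[2] :=
  1 + dig 0 x + 6 * dig 1 x + ∑' k : ℕ, (1 + 2 * modPow2 (k + 2) x) * 2 ^ (k + 2) * dig (k + 2) x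

theorem modPow2_natCast (k n : ℕ) : modPow2 k n = ((n % 2 ^ k : ℕ) : ℤ_[2]) := by
  rw [modPow2, appr_natCast]

theorem dig_natCast (i n : ℕ) : dig i n = (digit i n : ℤ_[2]) := by
  rw [dig, appr_natCast, pow_succ, Nat.mod_mul_right_div_self, Nat.mod_mod, digit]

theorem two_pow_mul_dig (i : ℕ) (x : ℤ_[2]) :
    2 ^ i * dig i x = modPow2 (i + 1) x - modPow2 i x := by
  have hlt : x.appr (i + 1) / 2 ^ i < 2 :=
    Nat.div_lt_of_lt_mul (by rw [← pow_succ]; exact appr_lt x (i + 1))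
  rw [dig, modPow2, modPow2, appr_eq_appr_mod i.le_succ x, Nat.mod_eq_of_lt hlt, eq_sub_iff_add_eq]
  exact_mod_cast Nat.div_add_mod (x.appr (i + 1)) (2 ^ i)

theorem modPow2_mem_tFunctions (k : ℕ) : modPow2 k ∈ tFunctions 2 :=
  natCast_appr_mem_tFunctions k

theorem two_pow_mul_dig_mem_tFunctions (i : ℕ) : (fun x => 2 ^ i * dig i x) ∈ tFunctions 2 := by
  simp_rw [two_pow_mul_dig]
  exact sub_mem (modPow2_mem_tFunctions _) (modPow2_mem_tFunctions _)

theorem summable_deltaSeries (x : ℤ_[2]) :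
    Summable fun k => (1 + 2 * modPow2 (k + 2) x) * 2 ^ (k + 2) * dig (k + 2) x :=
  (summable_pow_mul fun k => 4 * ((1 + 2 * modPow2 (k + 2) x) * dig (k + 2) x)).congr fun k => by
    push_cast
    ring

theorem deltaSeries_mem_tFunctions : deltaSeries ∈ tFunctions 2 := by
  have h6 : (fun x => 6 * dig 1 x) = fun x => 3 * (2 ^ 1 * dig 1 x) := funext fun x => by ring
  have hterm : ∀ k, (fun x => (1 + 2 * modPow2 (k + 2) x) * 2 ^ (k + 2) * dig (k + 2) x) ∈
      tFunctions 2 := fun k => by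
    simp_rw [mul_assoc _ (2 ^ (k + 2) : ℤ_[2])]
    exact mul_mem (add_mem (const_mem_tFunctions 1)
      (mul_mem (const_mem_tFunctions 2) (modPow2_mem_tFunctions _)))
      (two_pow_mul_dig_mem_tFunctions _)
  refine add_mem (add_mem (add_mem (const_mem_tFunctions 1) ?_) ?_)
    (tsum_mem_tFunctions hterm summable_deltaSeries)
  · simpa only [pow_zero, one_mul] using two_pow_mul_dig_mem_tFunctions 0
  · rw [h6]
    exact mul_mem (const_mem_tFunctions 3) (two_pow_mul_dig_mem_tFunctions 1)

theorem deltaSeries_natCast (n : ℕ) : deltaSeries n = onNat n := by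
  have hterm : ∀ k, (1 + 2 * modPow2 (k + 2) (n : ℤ_[2])) * 2 ^ (k + 2) * dig (k + 2) n =
      (term k n : ℤ_[2]) := fun k => by
    rw [modPow2_natCast, dig_natCast, term]
    push_cast
    ring
  rw [deltaSeries, dig_natCast, dig_natCast, tsum_congr hterm,
    tsum_eq_sum (s := range n) fun k hk => by
      rw [term_eq_zero_of_le (not_lt.1 (mt mem_range.2 hk)), Nat.cast_zero], onNat]
  push_cast
  ring

theorem inducedMod_natCast {g : ℤ_[2] → ℤ_[2]} (hg : g ∈ tFunctions 2) (k m : ℕ) :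
    inducedMod g k m = toZModPow k (g m) :=
  hg k _ _ (by rw [map_natCast, map_natCast, ZMod.natCast_zmod_val])

theorem cast_inducedMod {g : ℤ_[2] → ℤ_[2]} (hg : g ∈ tFunctions 2) {k : ℕ}
    (x : ZMod (2 ^ (k + 1))) :
    (ZMod.cast (inducedMod g (k + 1) x) : ZMod (2 ^ k)) = inducedMod g k (ZMod.cast x) := by
  rw [inducedMod, inducedMod, cast_toZModPow k (k + 1) k.le_succ]
  exact hg k _ _ (by rw [map_natCast, map_natCast, ZMod.natCast_zmod_val, ZMod.cast_eq_val])

theorem inducedMod_deltaSeries_natCast (k m : ℕ) : inducedMod deltaSeries k m = onNat m := by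
  rw [inducedMod_natCast deltaSeries_mem_tFunctions, deltaSeries_natCast, map_natCast]

theorem inducedMod_deltaSeries_add_two_pow {k m : ℕ} (hm : m < 2 ^ k) :
    inducedMod deltaSeries (k + 1) (m + 2 ^ k) = inducedMod deltaSeries (k + 1) m + 2 ^ k := by
  have hcast : (m : ZMod (2 ^ (k + 1))) + 2 ^ k = ((m + 2 ^ k : ℕ) : ZMod (2 ^ (k + 1))) := by
    push_cast; rfl
  rw [hcast, inducedMod_deltaSeries_natCast, inducedMod_deltaSeries_natCast,
    (ZMod.natCast_eq_natCast_iff _ _ _).2 (onNat_add_two_pow_modEq hm)]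
  push_cast; rfl

theorem sum_inducedMod_deltaSeries_sub (k : ℕ) :
    ∑ m ∈ range (2 ^ k), (inducedMod deltaSeries (k + 1) m - m) = 2 ^ k := by
  simp_rw [inducedMod_deltaSeries_natCast]
  have := (ZMod.intCast_eq_intCast_iff _ _ (2 ^ (k + 1))).2
    (by exact_mod_cast sum_onNat_sub_modEq k)
  push_cast at this
  exact this

theorem exists_iterate_inducedMod_deltaSeries_eq :
    ∀ (k : ℕ) (z : ZMod (2 ^ k)), ∃ j < 2 ^ k, (inducedMod deltaSeries k)^[j] 0 = z
  | 0, _ => ⟨0, one_pos, Subsingleton.elim (α := ZMod 1) _ _⟩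
  | k + 1, z =>
    ZMod.exists_iterate_zero_eq_succ (cast_inducedMod deltaSeries_mem_tFunctions)
      (fun _ => inducedMod_deltaSeries_add_two_pow) (sum_inducedMod_deltaSeries_sub k)
      (exists_iterate_inducedMod_deltaSeries_eq k) z

/-- The function `f x = 1 + δ_0(x) + 6·δ_1(x) + Σ_{k≥2} (1 + 2·(x mod 2^k))·2^k·δ_k(x)` is an
ergodic T-function: it is 1-Lipschitz and transitive modulo `2^k` for every `k ≥ 1`. -/
theorem example_delta_series_ergodic
    (f : ℤ_[2] → ℤ_[2])
    (hf : ∀ x : ℤ_[2], f x = 1 + dig 0 x + 6 * dig 1 x +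
        ∑' k : ℕ, (1 + 2 * modPow2 (k + 2) x) * 2 ^ (k + 2) * dig (k + 2) x) :
    (∀ a b : ℤ_[2], ‖f a - f b‖ ≤ ‖a - b‖) ∧
      ∀ k : ℕ, 1 ≤ k → TransitiveMod f k := by
  obtain rfl : f = deltaSeries := funext hf
  refine ⟨mem_tFunctions_iff.1 deltaSeries_mem_tFunctions, fun k _ z => ?_⟩
  obtain ⟨j, -, hj⟩ := exists_iterate_inducedMod_deltaSeries_eq k z
  exact ⟨j, hj⟩
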